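/- Let G be an ordered abelian group, H a non-trivial ordered abelian group, and suppose the natural embedding G ⪯ G ⊕ H (lexicographic sum, H infinitesimal) is elementary. If G ≡ G ⊕ H and H' ≡ H, then also G is elementarily embedded in G ⊕ H' (respectively G ≡ G ⊕ H'). -/

import Mathlib

/-! In a lexicographic product every atomic formula splits along the two coordinates
(`(a, b) < (a', b')` iff `a < a'`, or `a = a'` and `b < b'`), and a quantifier over `A ×ₗ B` is a
quantifier over `A` followed by one over `B`. So, by induction, a formula evaluated at a tuple of
pairs is equivalent to a finite disjunction `⋁ᵢ (φᵢ(as) ∧ ψᵢ(bs))` (a Feferman–Vaught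
decomposition). At the tuple `(0, …, 0)` of `H` each `ψᵢ` amounts to a sentence, whose truth only
depends on the theory of `H`; hence replacing `H` by `H' ≡ H` changes neither the formulas satisfied
by `(g, 0)` in `G ×ₗ H` nor the theory of `G ×ₗ H`. -/

open FirstOrder Language

universe u v

/-- Function symbols of the language of ordered abelian groups: a constant `0` and a binary `+`. -/
def oagFunctions : ℕ → Type
  | 0 => Unit
  | 2 => Unit
  | _ => Empty

/-- Relation symbols of the language of ordered abelian groups: a binary `<`. -/
def oagRelations : ℕ → Type
  | 2 => Unit
  | _ => Empty

/-- The first-order language `{+, 0, <}` of ordered abelian groups. -/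
def oagLang : FirstOrder.Language := ⟨oagFunctions, oagRelations⟩

/-- Any additive group with an order is naturally an `oagLang`-structure. -/
instance oagStructure (M : Type*) [AddCommGroup M] [LT M] : oagLang.Structure M where
  funMap := fun {n} f x =>
    match n, f, x with
    | 0, _, _ => 0
    | 1, f, _ => f.elim
    | 2, _, x => x 0 + x 1
    | (_ + 3), f, _ => f.elim
  RelMap := fun {n} r x =>
    match n, r, x with
    | 0, r, _ => r.elim
    | 1, r, _ => r.elim
    | 2, _, x => x 0 < x 1
    | (_ + 3), r, _ => r.elim

/-- The lexicographic product of two additive groups is an additive group. -/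
instance lexAddCommGroup (G H : Type*) [AddCommGroup G] [AddCommGroup H] :
    AddCommGroup (G ×ₗ H) :=
  inferInstanceAs (AddCommGroup (G × H))

/-- `f : M → N` is an elementary inclusion: it preserves and reflects all first-order
formulas of the language `L`. -/
def IsElemInclusion (L : FirstOrder.Language) (M : Type*) (N : Type*) [L.Structure M]
    [L.Structure N] (f : M → N) : Prop :=
  ∀ (n : ℕ) (φ : L.Formula (Fin n)) (v : Fin n → M),
    φ.Realize (f ∘ v) ↔ φ.Realize v

/-- A finite disjunction `⋁ᵢ (φᵢ ∧ ψᵢ)` in which each `φᵢ` is read in one structure and each `ψᵢ`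
in another. -/
abbrev PairDisj (L : FirstOrder.Language) (α : Type*) (k : ℕ) :=
  List (L.BoundedFormula α k × L.BoundedFormula α k)

namespace PairDisj

variable {L : FirstOrder.Language} {α : Type*} {k : ℕ} {M N : Type*} [L.Structure M] [L.Structure N]

def Realize (l : PairDisj L α k) (vM : α → M) (xM : Fin k → M) (vN : α → N) (xN : Fin k → N) :
    Prop :=
  ∃ p ∈ l, p.1.Realize vM xM ∧ p.2.Realize vN xN

/-- `¬ ⋁ᵢ (φᵢ ∧ ψᵢ) = ⋀ᵢ (¬φᵢ ∨ ¬ψᵢ)`, multiplied out into a disjunction of pairs. -/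
def neg : PairDisj L α k → PairDisj L α k
  | [] => [(⊤, ⊤)]
  | p :: l => (neg l).map (fun q => (p.1.not ⊓ q.1, q.2)) ++
      (neg l).map (fun q => (q.1, p.2.not ⊓ q.2))

def ex (l : PairDisj L α (k + 1)) : PairDisj L α k :=
  l.map fun p => (p.1.ex, p.2.ex)

variable {vM : α → M} {xM : Fin k → M} {vN : α → N} {xN : Fin k → N}

@[simp]
theorem realize_nil : Realize ([] : PairDisj L α k) vM xM vN xN ↔ False := by
  simp [Realize]

@[simp]
theorem realize_cons {p} {l : PairDisj L α k} :
    Realize (p :: l) vM xM vN xN ↔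
      (p.1.Realize vM xM ∧ p.2.Realize vN xN) ∨ Realize l vM xM vN xN := by
  simp [Realize]

@[simp]
theorem realize_append {l l' : PairDisj L α k} :
    Realize (l ++ l') vM xM vN xN ↔ Realize l vM xM vN xN ∨ Realize l' vM xM vN xN := by
  simp only [Realize, List.mem_append, or_and_right, exists_or]

theorem realize_map_inf_fst {φ : L.BoundedFormula α k} {l : PairDisj L α k} :
    Realize (l.map fun q => (φ ⊓ q.1, q.2)) vM xM vN xN ↔
      φ.Realize vM xM ∧ Realize l vM xM vN xN := by
  simp only [Realize, List.mem_map]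
  aesop

theorem realize_map_inf_snd {ψ : L.BoundedFormula α k} {l : PairDisj L α k} :
    Realize (l.map fun q => (q.1, ψ ⊓ q.2)) vM xM vN xN ↔
      ψ.Realize vN xN ∧ Realize l vM xM vN xN := by
  simp only [Realize, List.mem_map]
  aesop

@[simp]
theorem realize_neg {l : PairDisj L α k} :
    Realize l.neg vM xM vN xN ↔ ¬ Realize l vM xM vN xN := by
  induction l with
  | nil => simp [neg, Realize]
  | cons p l ih =>
    rw [neg, realize_append, realize_map_inf_fst, realize_map_inf_snd, ih, realize_cons]
    simp only [BoundedFormula.realize_not]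
    tauto

@[simp]
theorem realize_ex {l : PairDisj L α (k + 1)} :
    Realize l.ex vM xM vN xN ↔
      ∃ a b, Realize l vM (Fin.snoc xM a) vN (Fin.snoc xN b) := by
  simp only [ex, Realize, List.mem_map]
  aesop

end PairDisj


section Lex

variable {A B : Type*} [AddCommGroup A] [LT A] [AddCommGroup B] [LT B]
  {α : Type*}

theorem realize_term_toLex (t : oagLang.Term α) (vA : α → A) (vB : α → B) :
    t.realize (fun i => toLex (vA i, vB i)) = toLex (t.realize vA, t.realize vB) := by
  induction t with
  | var => rfl
  | @func l f ts ih =>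
    match l, f with
    | 0, _ => rfl
    | 2, _ =>
      show (ts 0).realize _ + (ts 1).realize _ = _
      rw [ih 0, ih 1]
      rfl

theorem realize_term_sumElim_toLex {k : ℕ} (t : oagLang.Term (α ⊕ Fin k)) (vA : α → A)
    (vB : α → B) (xA : Fin k → A) (xB : Fin k → B) :
    t.realize (Sum.elim (fun i => toLex (vA i, vB i)) (fun i => toLex (xA i, xB i))) =
      toLex (t.realize (Sum.elim vA xA), t.realize (Sum.elim vB xB)) := by
  rw [← realize_term_toLex]
  congr
  funext j
  cases j <;> rfl

def lexDecomp : {k : ℕ} → oagLang.BoundedFormula α k → PairDisj oagLang α k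
  | _, .falsum => []
  | _, .equal t₁ t₂ => [(.equal t₁ t₂, .equal t₁ t₂)]
  | _, .rel (l := 2) R ts => [(.rel R ts, ⊤), (.equal (ts 0) (ts 1), .rel R ts)]
  | _, .rel _ _ => [] -- `<` is the only relation symbol
  | _, .imp φ ψ => (lexDecomp φ).neg ++ lexDecomp ψ
  | _, .all φ => (lexDecomp φ).neg.ex.neg

theorem realize_lexDecomp {k : ℕ} (φ : oagLang.BoundedFormula α k) (vA : α → A) (vB : α → B)
    (xA : Fin k → A) (xB : Fin k → B) :
    φ.Realize (M := A ×ₗ B) (fun i => toLex (vA i, vB i)) (fun i => toLex (xA i, xB i)) ↔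
      (lexDecomp φ).Realize vA xA vB xB := by
  induction φ with
  | falsum => simp [lexDecomp, BoundedFormula.Realize]
  | equal t₁ t₂ =>
    show t₁.realize _ = t₂.realize _ ↔ _
    rw [realize_term_sumElim_toLex, realize_term_sumElim_toLex, toLex_inj, Prod.ext_iff]
    simp only [lexDecomp, PairDisj.realize_cons, PairDisj.realize_nil, or_false]
    rfl
  | @rel _ l R ts =>
    match l, R with
    | 2, R =>
      show (ts 0).realize _ < (ts 1).realize _ ↔ _
      rw [realize_term_sumElim_toLex, realize_term_sumElim_toLex, Prod.Lex.toLex_lt_toLex]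
      simp only [lexDecomp, PairDisj.realize_cons, PairDisj.realize_nil, or_false,
        BoundedFormula.realize_top, and_true]
      rfl
  | imp φ ψ ihφ ihψ =>
    rw [BoundedFormula.realize_imp, ihφ, ihψ, lexDecomp, PairDisj.realize_append,
      PairDisj.realize_neg]
    tauto
  | @all k φ ih =>
    have snoc_toLex (a : A) (b : B) :
        (Fin.snoc (fun i => toLex (xA i, xB i)) (toLex (a, b)) : Fin (k + 1) → A ×ₗ B) =
          fun i => toLex ((Fin.snoc xA a : Fin (k + 1) → A) i,
            (Fin.snoc xB b : Fin (k + 1) → B) i) := by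
      funext i
      refine Fin.lastCases ?_ (fun j => ?_) i <;> simp
    simp only [BoundedFormula.realize_all, lexDecomp, PairDisj.realize_neg, PairDisj.realize_ex,
      ← ih, ← snoc_toLex, Lex.forall, Prod.forall, not_exists, not_not]

theorem formula_realize_lexDecomp (φ : oagLang.Formula α) (vA : α → A) (vB : α → B) :
    φ.Realize (M := A ×ₗ B) (fun i => toLex (vA i, vB i)) ↔
      ∃ p ∈ lexDecomp φ, Formula.Realize p.1 vA ∧ Formula.Realize p.2 vB := by
  rw [Formula.Realize, Subsingleton.elim (default : Fin 0 → A ×ₗ B) fun i =>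
    toLex ((default : Fin 0 → A) i, (default : Fin 0 → B) i), realize_lexDecomp]
  rfl

theorem formula_realize_toLex_iff_of_realize_iff {A' B' : Type*} [AddCommGroup A'] [LT A']
    [AddCommGroup B'] [LT B'] {vA : α → A} {vB : α → B} {vA' : α → A'} {vB' : α → B'}
    (hA : ∀ ψ : oagLang.Formula α, ψ.Realize vA ↔ ψ.Realize vA')
    (hB : ∀ ψ : oagLang.Formula α, ψ.Realize vB ↔ ψ.Realize vB') (φ : oagLang.Formula α) :
    φ.Realize (M := A ×ₗ B) (fun i => toLex (vA i, vB i)) ↔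
      φ.Realize (M := A' ×ₗ B') (fun i => toLex (vA' i, vB' i)) := by
  simp only [formula_realize_lexDecomp, hA, hB]

end Lex

theorem FirstOrder.Language.ElementarilyEquivalent.lex {A B A' B' : Type*} [AddCommGroup A]
    [LT A] [AddCommGroup B] [LT B] [AddCommGroup A'] [LT A'] [AddCommGroup B'] [LT B'] (hA : A ≅[oagLang] A')
    (hB : B ≅[oagLang] B') : (A ×ₗ B) ≅[oagLang] (A' ×ₗ B') := by
  refine elementarilyEquivalent_iff.2 fun φ => ?_
  rw [Sentence.Realize, Sentence.Realize]
  convert formula_realize_toLex_iff_of_realize_iff (vA := default) (vB := default)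
    (vA' := default) (vB' := default) hA.realize_sentence hB.realize_sentence φ using 2

theorem realize_const_zero_iff_realize_subst {M : Type*} [AddCommGroup M] [LT M] {α : Type*}
    (ψ : oagLang.Formula α) :
    ψ.Realize (fun _ => (0 : M)) ↔ M ⊨ ψ.subst fun _ => Constants.term (L := oagLang) () := by
  rw [Sentence.Realize, Formula.Realize, Formula.Realize, BoundedFormula.realize_subst]
  rfl

theorem realize_const_zero_iff_of_elementarilyEquivalent {M N : Type*} [AddCommGroup M] [LT M]
    [AddCommGroup N] [LT N] (h : M ≅[oagLang] N) {α : Type*} (ψ : oagLang.Formula α) :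
    ψ.Realize (fun _ => (0 : M)) ↔ ψ.Realize (fun _ => (0 : N)) := by
  rw [realize_const_zero_iff_realize_subst, realize_const_zero_iff_realize_subst]
  exact h.realize_sentence _

theorem stmt11_general (G H H' : Type u) [AddCommGroup G] [LinearOrder G]
    [AddCommGroup H] [LinearOrder H] [AddCommGroup H'] [LinearOrder H']
    (hHH' : H' ≅[oagLang] H) :
    (IsElemInclusion oagLang G (G ×ₗ H) (fun g => toLex (g, (0 : H))) →
      IsElemInclusion oagLang G (G ×ₗ H') (fun g => toLex (g, (0 : H')))) ∧
    ((G ≅[oagLang] (G ×ₗ H)) → (G ≅[oagLang] (G ×ₗ H'))) := by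
  refine ⟨fun hH n φ v => ?_, fun hGH => hGH.trans (.lex rfl hHH'.symm)⟩
  rw [← hH n φ v]
  exact formula_realize_toLex_iff_of_realize_iff (fun _ => .rfl)
    (realize_const_zero_iff_of_elementarilyEquivalent hHH') φ

/-- Augmentability by infinitesimals only depends on the elementary equivalence class of the
augment: if `G ⪯ G ⊕ H` (resp. `G ≡ G ⊕ H`) and `H' ≡ H`, then `G ⪯ G ⊕ H'`
(resp. `G ≡ G ⊕ H'`). -/
theorem stmt11 (G H H' : Type u) [AddCommGroup G] [LinearOrder G]
    [AddCommGroup H] [LinearOrder H] [Nontrivial H] [AddCommGroup H'] [LinearOrder H']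
    (hHH' : H' ≅[oagLang] H) :
    (IsElemInclusion oagLang G (G ×ₗ H) (fun g => toLex (g, (0 : H))) →
      IsElemInclusion oagLang G (G ×ₗ H') (fun g => toLex (g, (0 : H')))) ∧
    ((G ≅[oagLang] (G ×ₗ H)) → (G ≅[oagLang] (G ×ₗ H'))) :=
  stmt11_general G H H' hHH'
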